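/- arXiv:2302.06483 — 2 statements merged into one kernel-verified Lean document; each statement's English description precedes it below -/
import Mathlib

section
/- Let f^{[α]} ∈ I^{[Σ]} and let G^{[Σ]} ⊆ I^{[Σ]} be complete and a signature Gröbner basis of I^{[Σ]} up to signature sig(α). If f^{[α]} is super reducible by G^{[Σ]}, then f^{[α]} is sig-reducible by G^{[Σ]}. -/
/-!  Signature Gröbner bases in the mixed algebra `R[x₁,…,x_k]⟨y₁,…,y_n⟩`
over a principal ideal domain `R`, following Hofstadler–Verron. -/

open Finsupp

/-- A mixed monomial `v·w`, with `v` a commutative monomial in `x₁,…,x_k`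
(recorded by its exponent vector) and `w` a word in the noncommutative
variables `y₁,…,y_n`. -/
@[ext]
structure MMon (k n : ℕ) where
  c : Fin k →₀ ℕ
  w : FreeMonoid (Fin n)

namespace MMon

instance (k n : ℕ) : One (MMon k n) := ⟨⟨0, 1⟩⟩
noncomputable instance (k n : ℕ) : Mul (MMon k n) := ⟨fun a b => ⟨a.c + b.c, a.w * b.w⟩⟩

@[simp] lemma mul_c {k n : ℕ} (a b : MMon k n) : (a * b).c = a.c + b.c := rfl
@[simp] lemma mul_w {k n : ℕ} (a b : MMon k n) : (a * b).w = a.w * b.w := rfl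
@[simp] lemma one_c {k n : ℕ} : (1 : MMon k n).c = 0 := rfl
@[simp] lemma one_w {k n : ℕ} : (1 : MMon k n).w = 1 := rfl

noncomputable instance (k n : ℕ) : Monoid (MMon k n) where
  mul_assoc a b c := by ext : 1 <;> simp [add_assoc, mul_assoc]
  one_mul a := by ext : 1 <;> simp
  mul_one a := by ext : 1 <;> simp

end MMon

/-- A module monomial `u·a·ε_i·b` of the free bimodule `Σ = (A ⊗_{R[X]} A)^r`. -/
@[ext]
structure ModMon (k n r : ℕ) where
  u : Fin k →₀ ℕ
  a : FreeMonoid (Fin n)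
  i : Fin r
  b : FreeMonoid (Fin n)

instance {k n r : ℕ} [NeZero r] : Inhabited (ModMon k n r) := ⟨⟨0, 1, default, 1⟩⟩

/-- The mixed algebra `A = R[x₁,…,x_k]⟨y₁,…,y_n⟩`, realised as the monoid
algebra of the monoid of mixed monomials. -/
abbrev MixedAlg (R : Type) [CommRing R] (k n : ℕ) : Type := MonoidAlgebra R (MMon k n)

/-- The free `A`-bimodule `Σ = (A ⊗_{R[X]} A)^r`, realised as the free
`R`-module on the module monomials `u·a·ε_i·b`. -/
abbrev SigModule (R : Type) [CommRing R] (k n r : ℕ) : Type := ModMon k n r →₀ R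

section Defs

variable {R : Type} [CommRing R] {k n r : ℕ}

/-- The term `c·m` of `A` (an element of `T(A)` when `c ≠ 0`). -/
noncomputable def trm (m : MMon k n) (c : R) : MixedAlg R k n := MonoidAlgebra.single m c

/-- The word `b ∈ ⟨Y⟩`, viewed as an element of `A`. -/
noncomputable def wrd (b : FreeMonoid (Fin n)) : MixedAlg R k n :=
  MonoidAlgebra.single ⟨0, b⟩ 1

/-- Multiplication `m·σ` of a module monomial by a mixed monomial on the left. -/
noncomputable def mulL (m : MMon k n) (σ : ModMon k n r) : ModMon k n r :=
  ⟨m.c + σ.u, m.w * σ.a, σ.i, σ.b⟩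

/-- Multiplication `σ·m` of a module monomial by a mixed monomial on the right. -/
noncomputable def mulR (σ : ModMon k n r) (m : MMon k n) : ModMon k n r :=
  ⟨σ.u + m.c, σ.a, σ.i, σ.b * m.w⟩

/-- The two-sided multiple `m·σ·b` of a module monomial by a mixed monomial `m`
on the left and a word `b` on the right. -/
noncomputable def mulLR (m : MMon k n) (σ : ModMon k n r) (b : FreeMonoid (Fin n)) : ModMon k n r :=
  ⟨m.c + σ.u, m.w * σ.a, σ.i, σ.b * b⟩

/-- The left action of `A` on the bimodule `Σ`. -/
noncomputable def actL (f : MixedAlg R k n) (α : SigModule R k n r) : SigModule R k n r :=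
  Finsupp.sum f.coeff fun m cm => Finsupp.sum α fun σ cσ => Finsupp.single (mulL m σ) (cm * cσ)

/-- The right action of `A` on the bimodule `Σ`. -/
noncomputable def actR (α : SigModule R k n r) (f : MixedAlg R k n) : SigModule R k n r :=
  Finsupp.sum f.coeff fun m cm => Finsupp.sum α fun σ cσ => Finsupp.single (mulR σ m) (cσ * cm)

/-- The two-sided multiple `t·α·b` of `α ∈ Σ` by the term `t = c·m` on the left
and the word `b` on the right. -/
noncomputable def scaleLR (m : MMon k n) (c : R) (α : SigModule R k n r)
    (b : FreeMonoid (Fin n)) : SigModule R k n r :=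
  Finsupp.sum α fun σ cσ => Finsupp.single (mulLR m σ b) (c * cσ)

/-- The `A`-bimodule homomorphism `Σ → A`, `α ↦ ᾱ`, sending `ε_i` to `f_i`
(where `F i = f_i` are the generators). -/
noncomputable def barMap (F : Fin r → MixedAlg R k n) (α : SigModule R k n r) :
    MixedAlg R k n :=
  Finsupp.sum α fun σ cσ =>
    trm ⟨σ.u, σ.a⟩ cσ * F σ.i * wrd σ.b

/-- The basis vector `ε_i` of `Σ`. -/
noncomputable def epsMod (i : Fin r) : SigModule R k n r :=
  Finsupp.single ⟨0, 1, i, 1⟩ 1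

/-- The labeled module `I^{[Σ]}`: pairs `f^{[α]}` with `ᾱ = f`. -/
def Labeled (F : Fin r → MixedAlg R k n) (p : MixedAlg R k n × SigModule R k n r) : Prop :=
  barMap F p.2 = p.1

/-- A syzygy of `I^{[Σ]}`: an element `α ∈ Σ` with `ᾱ = 0`. -/
def IsSyzygy (F : Fin r → MixedAlg R k n) (γ : SigModule R k n r) : Prop :=
  barMap F γ = 0

section Orders

variable [LinearOrder (MMon k n)] [LinearOrder (ModMon k n r)]

/-- The leading monomial of `f ∈ A` (with `LM 0 = ⊥`). -/
noncomputable def LMb (f : MixedAlg R k n) : WithBot (MMon k n) := f.coeff.support.max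

/-- The leading monomial of `f ∈ A` (defaulting to `1` for `f = 0`). -/
noncomputable def LMd (f : MixedAlg R k n) : MMon k n := WithBot.unbotD 1 (f.coeff.support.max)

/-- The leading coefficient of `f ∈ A` (`0` for `f = 0`). -/
noncomputable def LC (f : MixedAlg R k n) : R := f.coeff (LMd f)

/-- The leading term of `f ∈ A`, as an element of `A` (`0` for `f = 0`). -/
noncomputable def LTerm (f : MixedAlg R k n) : MixedAlg R k n := trm (LMd f) (LC f)

/-- The signature monomial of `α ∈ Σ` (with `⊥` for `α = 0`): the `⪯`-largest
monomial of the support of `α`. -/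
noncomputable def sigb (α : SigModule R k n r) : WithBot (ModMon k n r) := α.support.max

variable [NeZero r]

/-- The signature monomial of `α ∈ Σ`, defaulting for `α = 0`. -/
noncomputable def sigMd (α : SigModule R k n r) : ModMon k n r :=
  WithBot.unbotD default (α.support.max)

/-- The coefficient of the signature of `α`. -/
noncomputable def sigC (α : SigModule R k n r) : R := α (sigMd α)

/-- The signature `sig(α)` of `α ∈ Σ`, as a term, i.e. a single-term element of
`Σ` (`0` for `α = 0`).  Equality `sig α = sig β` of signatures as *terms* is
`sigT α = sigT β`; the relation `sig α ≃ sig β` is `sigb α = sigb β`; the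
relation `sig α ≺ sig β` is `sigb α < sigb β`. -/
noncomputable def sigT (α : SigModule R k n r) : SigModule R k n r :=
  Finsupp.single (sigMd α) (sigC α)

end Orders

/-- The compatibility requirements on the chosen monomial ordering on `M(A)`
and module ordering on `M(Σ)`: both are compatible with multiplication,
both are well-orderings, and they are compatible with each other. -/
structure IsOrderSetting (k n r : ℕ) [LinearOrder (MMon k n)]
    [LinearOrder (ModMon k n r)] : Prop where
  mon_wf : WellFounded ((· < ·) : MMon k n → MMon k n → Prop)
  mod_wf : WellFounded ((· < ·) : ModMon k n r → ModMon k n r → Prop)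
  mon_mul : ∀ a b m m' : MMon k n, m ≤ m' → a * m * b ≤ a * m' * b
  mod_mul : ∀ (m : MMon k n) (b : FreeMonoid (Fin n)) (σ τ : ModMon k n r),
      σ ≤ τ → mulLR m σ b ≤ mulLR m τ b
  compat₁ : ∀ (u v : Fin k →₀ ℕ) (a b : FreeMonoid (Fin n)) (i : Fin r),
      (⟨u, a⟩ : MMon k n) < ⟨v, b⟩ ↔ (⟨u, a, i, 1⟩ : ModMon k n r) < ⟨v, b, i, 1⟩
  compat₂ : ∀ (u v : Fin k →₀ ℕ) (a b : FreeMonoid (Fin n)) (i : Fin r),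
      (⟨u, a⟩ : MMon k n) < ⟨v, b⟩ ↔ (⟨u, 1, i, a⟩ : ModMon k n r) < ⟨v, 1, i, b⟩

end Defs

/-! ### Ambiguities -/

/-- `WordAmb a b c d p q` says that `(a ⊗ b, c ⊗ d, p, q)` is an ambiguity
(overlap, inclusion or external) of the words `p` and `q`. -/
inductive WordAmb {n : ℕ} :
    FreeMonoid (Fin n) → FreeMonoid (Fin n) → FreeMonoid (Fin n) → FreeMonoid (Fin n) →
    FreeMonoid (Fin n) → FreeMonoid (Fin n) → Prop
  | overlap₁ (a b p q : FreeMonoid (Fin n)) (h : a * p = q * b)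
      (ha : a ≠ 1) (hb : b ≠ 1) (hla : a.length < q.length) (hlb : b.length < p.length) :
      WordAmb a 1 1 b p q
  | overlap₂ (a b p q : FreeMonoid (Fin n)) (h : p * a = b * q)
      (ha : a ≠ 1) (hb : b ≠ 1) (hla : a.length < q.length) (hlb : b.length < p.length) :
      WordAmb 1 a b 1 p q
  | inclusion₁ (a b p q : FreeMonoid (Fin n)) (h : p = a * q * b) :
      WordAmb 1 1 a b p q
  | inclusion₂ (a b p q : FreeMonoid (Fin n)) (h : a * p * b = q) :
      WordAmb a b 1 1 p q
  | external₁ (m p q : FreeMonoid (Fin n)) :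
      WordAmb 1 (m * q) (p * m) 1 p q
  | external₂ (m p q : FreeMonoid (Fin n)) :
      WordAmb (q * m) 1 1 (m * p) p q

section Amb

variable {R : Type} [CommRing R] {k n r : ℕ}
variable [LinearOrder (MMon k n)] [LinearOrder (ModMon k n r)]

/-- `IsAmb f g m₁ n₁ m₂ n₂` says that `(m₁ ⊗ n₁, m₂ ⊗ n₂)` is an ambiguity of the
(nonzero) polynomials `f` and `g`: an ambiguity of the word parts of their
leading monomials, with left cofactors completed by `lcm(u,v)/u` resp.
`lcm(u,v)/v` on the commutative parts. -/
def IsAmb (f g : MixedAlg R k n) (m₁ : MMon k n) (n₁ : FreeMonoid (Fin n))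
    (m₂ : MMon k n) (n₂ : FreeMonoid (Fin n)) : Prop :=
  ∃ a b c d : FreeMonoid (Fin n),
    WordAmb a b c d (LMd f).w (LMd g).w ∧
    m₁ = ⟨((LMd f).c ⊔ (LMd g).c) - (LMd f).c, a⟩ ∧ n₁ = b ∧
    m₂ = ⟨((LMd f).c ⊔ (LMd g).c) - (LMd g).c, c⟩ ∧ n₂ = d

/-- The leading monomial `LM(a) = LM(m₁ f n₁) = LM(m₂ g n₂)` of an ambiguity. -/
noncomputable def ambLM (f : MixedAlg R k n) (m₁ : MMon k n) (n₁ : FreeMonoid (Fin n)) :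
    MMon k n :=
  m₁ * LMd f * ⟨0, n₁⟩

variable [IsDomain R] [GCDMonoid R]

/-- The cofactor `lcmlc(f,g)/LC(f)`. -/
noncomputable def cofL (f g : MixedAlg R k n) : R :=
  Classical.choose (dvd_lcm_left (LC f) (LC g))

/-- The cofactor `lcmlc(f,g)/LC(g)`. -/
noncomputable def cofR (f g : MixedAlg R k n) : R :=
  Classical.choose (dvd_lcm_right (LC f) (LC g))

variable [NeZero r]

/-- The signature `SIG(a) = max(sig(c_f m₁ α n₁), −sig(c_g m₂ β n₂))` (first in
case of tie) of an ambiguity `a = (m₁ ⊗ n₁, m₂ ⊗ n₂)` of `f^{[α]]`, `g^{[β]}`,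
as a term (single-term element) of `Σ`. -/
noncomputable def ambSIG (f g : MixedAlg R k n) (α β : SigModule R k n r)
    (m₁ : MMon k n) (n₁ : FreeMonoid (Fin n)) (m₂ : MMon k n) (n₂ : FreeMonoid (Fin n)) :
    SigModule R k n r :=
  if sigb (scaleLR m₂ (cofR f g) β n₂) ≤ sigb (scaleLR m₁ (cofL f g) α n₁) then
    sigT (scaleLR m₁ (cofL f g) α n₁)
  else
    - sigT (scaleLR m₂ (cofR f g) β n₂)

/-- An ambiguity is regular if `sig(m₁ α n₁) ≄ sig(m₂ β n₂)`. -/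
def RegAmb (α β : SigModule R k n r) (m₁ : MMon k n) (n₁ : FreeMonoid (Fin n))
    (m₂ : MMon k n) (n₂ : FreeMonoid (Fin n)) : Prop :=
  sigb (scaleLR m₁ (1 : R) α n₁) ≠ sigb (scaleLR m₂ (1 : R) β n₂)

/-- An ambiguity is singular if `sig(c_f m₁ α n₁) = sig(c_g m₂ β n₂)`. -/
def SingAmb (f g : MixedAlg R k n) (α β : SigModule R k n r) (m₁ : MMon k n)
    (n₁ : FreeMonoid (Fin n)) (m₂ : MMon k n) (n₂ : FreeMonoid (Fin n)) : Prop :=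
  sigT (scaleLR m₁ (cofL f g) α n₁) = sigT (scaleLR m₂ (cofR f g) β n₂)

/-- The polynomial part of the S-polynomial of an ambiguity. -/
noncomputable def SPolP (f g : MixedAlg R k n) (m₁ : MMon k n) (n₁ : FreeMonoid (Fin n))
    (m₂ : MMon k n) (n₂ : FreeMonoid (Fin n)) : MixedAlg R k n :=
  trm m₁ (cofL f g) * f * wrd n₁ - trm m₂ (cofR f g) * g * wrd n₂

/-- The module part of the S-polynomial of an ambiguity. -/
noncomputable def SPolM (f g : MixedAlg R k n) (α β : SigModule R k n r) (m₁ : MMon k n)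
    (n₁ : FreeMonoid (Fin n)) (m₂ : MMon k n) (n₂ : FreeMonoid (Fin n)) :
    SigModule R k n r :=
  scaleLR m₁ (cofL f g) α n₁ - scaleLR m₂ (cofR f g) β n₂

/-- The polynomial part of the G-polynomial of an ambiguity, w.r.t. Bézout
coefficients `c`, `d`. -/
noncomputable def GPolP (c d : R) (f g : MixedAlg R k n) (m₁ : MMon k n)
    (n₁ : FreeMonoid (Fin n)) (m₂ : MMon k n) (n₂ : FreeMonoid (Fin n)) : MixedAlg R k n :=
  trm m₁ c * f * wrd n₁ + trm m₂ d * g * wrd n₂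

/-- The module part of the G-polynomial of an ambiguity, w.r.t. Bézout
coefficients `c`, `d`. -/
noncomputable def GPolM (c d : R) (α β : SigModule R k n r) (m₁ : MMon k n)
    (n₁ : FreeMonoid (Fin n)) (m₂ : MMon k n) (n₂ : FreeMonoid (Fin n)) :
    SigModule R k n r :=
  scaleLR m₁ c α n₁ + scaleLR m₂ d β n₂

/-- `BezoutFor c d f g`: `c, d` are Bézout coefficients for `LC f`, `LC g`. -/
def BezoutFor (c d : R) (f g : MixedAlg R k n) : Prop :=
  c * LC f + d * LC g = gcd (LC f) (LC g)

end Amb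

/-! ### Reductions, bases, cover -/

section Red

variable {R : Type} [CommRing R] {k n r : ℕ}
variable [LinearOrder (MMon k n)] [LinearOrder (ModMon k n r)]

/-- `f^{[α]}` is (top) sig-reducible by `G`: there are `g^{[β]} ∈ G`, a term
`t = c·m` and a word `b` with `LT(t g b) = LT(f) > LT(f - t g b)` and
`sig(t β b) ⪯ sig(α)`. -/
def SigReducible (G : Set (MixedAlg R k n × SigModule R k n r))
    (f : MixedAlg R k n) (α : SigModule R k n r) : Prop :=
  ∃ g β, (g, β) ∈ G ∧ ∃ (m : MMon k n) (c : R) (b : FreeMonoid (Fin n)), c ≠ 0 ∧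
    LTerm (trm m c * g * wrd b) = LTerm f ∧
    LMb (f - trm m c * g * wrd b) < LMb f ∧
    sigb (scaleLR m c β b) ≤ sigb α

/-- `f^{[α]}` is regular sig-reducible by `G`. -/
def RegSigReducible (G : Set (MixedAlg R k n × SigModule R k n r))
    (f : MixedAlg R k n) (α : SigModule R k n r) : Prop :=
  ∃ g β, (g, β) ∈ G ∧ ∃ (m : MMon k n) (c : R) (b : FreeMonoid (Fin n)), c ≠ 0 ∧
    LTerm (trm m c * g * wrd b) = LTerm f ∧
    LMb (f - trm m c * g * wrd b) < LMb f ∧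
    sigb (scaleLR m c β b) < sigb α

/-- `f^{[α]}` is super reducible by `G`: there are `g^{[β]} ∈ G`, a term `t` and
a word `b` with `sig(α) = sig(t β b)` (as terms) and `LM(f) = LM(t g b)`. -/
def SuperReducible [NeZero r] (G : Set (MixedAlg R k n × SigModule R k n r))
    (f : MixedAlg R k n) (α : SigModule R k n r) : Prop :=
  ∃ g β, (g, β) ∈ G ∧ ∃ (m : MMon k n) (c : R) (b : FreeMonoid (Fin n)), c ≠ 0 ∧
    sigT α = sigT (scaleLR m c β b) ∧
    LMb f = LMb (trm m c * g * wrd b)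

/-- `α ∈ Σ` is (top) reducible by the set `H ⊆ Σ`: `sig(α) = sig(t γ b)` for
some `γ ∈ H`, term `t` and word `b`. -/
def ModReducible [NeZero r] (H : Set (SigModule R k n r)) (α : SigModule R k n r) : Prop :=
  ∃ γ ∈ H, ∃ (m : MMon k n) (c : R) (b : FreeMonoid (Fin n)), c ≠ 0 ∧
    sigT α = sigT (scaleLR m c γ b)

/-- `G` is a (strong) signature Gröbner basis of `I^{[Σ]}`. -/
def IsSigGB (F : Fin r → MixedAlg R k n) (G : Set (MixedAlg R k n × SigModule R k n r)) :
    Prop :=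
  ∀ f α, barMap F α = f → f ≠ 0 → SigReducible G f α

/-- `G` is a signature Gröbner basis of `I^{[Σ]}` up to (module monomial)
signature `σ`. -/
def IsSigGBUpTo (F : Fin r → MixedAlg R k n)
    (G : Set (MixedAlg R k n × SigModule R k n r)) (σ : WithBot (ModMon k n r)) : Prop :=
  ∀ f α, barMap F α = f → f ≠ 0 → sigb α < σ → SigReducible G f α

/-- `H` is a syzygy basis of `I^{[Σ]}`. -/
def IsSyzBasis [NeZero r] (F : Fin r → MixedAlg R k n) (H : Set (SigModule R k n r)) :
    Prop :=
  ∀ γ, IsSyzygy F γ → γ ≠ 0 → ModReducible H γ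

variable [IsDomain R] [GCDMonoid R] [NeZero r]

/-- `G` is complete: the G-polynomials (w.r.t. non-singular Bézout coefficients)
of all ambiguities of `G` are sig-reducible by `G`. -/
def CompleteSet (G : Set (MixedAlg R k n × SigModule R k n r)) : Prop :=
  ∀ g₁ β₁ g₂ β₂, (g₁, β₁) ∈ G → (g₂, β₂) ∈ G →
    ∀ m₁ n₁ m₂ n₂, IsAmb g₁ g₂ m₁ n₁ m₂ n₂ →
      ∀ c d, BezoutFor c d g₁ g₂ →
        sigb (GPolM c d β₁ β₂ m₁ n₁ m₂ n₂) = sigb (ambSIG g₁ g₂ β₁ β₂ m₁ n₁ m₂ n₂) →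
        SigReducible G (GPolP c d g₁ g₂ m₁ n₁ m₂ n₂) (GPolM c d β₁ β₂ m₁ n₁ m₂ n₂)

/-- `MonLcm σ₁ σ₂ τ`: the least common multiple `lcm(σ₁,σ₂)` of the module
monomials `σ₁ = u₁a₁ε_jb₁`, `σ₂ = u₂a₂ε_jb₂` is defined and equals `τ`. -/
def MonLcm (σ₁ σ₂ τ : ModMon k n r) : Prop :=
  σ₁.i = σ₂.i ∧ τ.i = σ₁.i ∧ τ.u = σ₁.u ⊔ σ₂.u ∧
  ((τ.a = σ₁.a ∧ ∃ s, σ₁.a = s * σ₂.a) ∨ (τ.a = σ₂.a ∧ ∃ s, σ₂.a = s * σ₁.a)) ∧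
  ((τ.b = σ₁.b ∧ ∃ s, σ₁.b = σ₂.b * s) ∨ (τ.b = σ₂.b ∧ ∃ s, σ₂.b = σ₁.b * s))

/-- `H` is sig-complete: all sig-Combinations of elements of `H` are reducible
by `H`. -/
def SigCompleteSet (H : Set (SigModule R k n r)) : Prop :=
  ∀ γ₁ ∈ H, ∀ γ₂ ∈ H, ∀ τ, MonLcm (sigMd γ₁) (sigMd γ₂) τ →
    ∀ (m₁ : MMon k n) (b₁ : FreeMonoid (Fin n)) (m₂ : MMon k n) (b₂ : FreeMonoid (Fin n)),
      mulLR m₁ (sigMd γ₁) b₁ = τ → mulLR m₂ (sigMd γ₂) b₂ = τ →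
      ∀ c d : R, c * sigC γ₁ + d * sigC γ₂ = gcd (sigC γ₁) (sigC γ₂) →
        ModReducible H (scaleLR m₁ c γ₁ b₁ + scaleLR m₂ d γ₂ b₂)

/-- The ambiguity `a` (of `g₁^{[β₁]}`, `g₂^{[β₂]}`), with signature `SIG(a)` and
leading monomial `LM(a)`, is covered by `(G, H)`: there are `g^{[β]} ∈ G`,
`γ ∈ H`, terms `t, t'` (possibly `0`) and words `b, b'` with
`SIG(a) = sig(t β b) + sig(t' γ b')` and `LM(t g b) < LM(a)`. -/
def CoveredBy (G : Set (MixedAlg R k n × SigModule R k n r))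
    (H : Set (SigModule R k n r)) (Sig : SigModule R k n r) (Lm : MMon k n) : Prop :=
  ∃ g β, (g, β) ∈ G ∧ ∃ γ ∈ H,
    ∃ (m : MMon k n) (c : R) (b : FreeMonoid (Fin n))
      (m' : MMon k n) (c' : R) (b' : FreeMonoid (Fin n)),
      Sig = sigT (scaleLR m c β b) + sigT (scaleLR m' c' γ b') ∧
      LMb (trm m c * g * wrd b) < (Lm : WithBot (MMon k n))

end Red

/-!
Let `T = LM(f) = LM(t g b)`. If `LC g ∣ LC f`, a multiple of `g` sig-reduces `f` directly.
Otherwise `f - t g b` still has leading monomial `T`, and its signature is strictly below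
`sig(α)` because `sig(α)` and `sig(t β b)` agree as terms; being a signature Gröbner basis up to
`sig(α)`, `G` sig-reduces it by some `t₂ g₂ b₂`. Then `LC f ∈ (LC g, LC g₂)`, so
`gcd(LC g, LC g₂) ∣ LC f`. As `T` is a common multiple of `LM(g)` and `LM(g₂)`, it factors as
`l · LM(a) · w` for an ambiguity `a` of `g` and `g₂`, whose G-polynomial has leading
coefficient `gcd(LC g, LC g₂)` at `LM(a)` and signature `SIG(a)`, which lies below `sig(α)` after
multiplication by `l` and `w`. By completeness the G-polynomial is sig-reducible, and the
reducer, multiplied by `l` and `w`, sig-reduces `f`.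
-/

lemma FreeMonoid.mul_eq_mul_iff {α : Type*} {a b c d : FreeMonoid α} :
    a * b = c * d ↔ (∃ u, c = a * u ∧ b = u * d) ∨ (∃ u, a = c * u ∧ d = u * b) :=
  FreeMonoid.toList.injective.eq_iff.symm.trans List.append_eq_append_iff

lemma FreeMonoid.length_lt_length_mul_left {α : Type*} {v : FreeMonoid α} (hv : v ≠ 1)
    (s : FreeMonoid α) : s.length < (v * s).length := by
  have := FreeMonoid.length_eq_zero.not.2 hv
  rw [FreeMonoid.length_mul]; omega

lemma FreeMonoid.length_lt_length_mul_right {α : Type*} {v : FreeMonoid α} (hv : v ≠ 1)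
    (s : FreeMonoid α) : s.length < (s * v).length := by
  have := FreeMonoid.length_eq_zero.not.2 hv
  rw [FreeMonoid.length_mul]; omega

section Words

variable {n : ℕ} {a b c d p q : FreeMonoid (Fin n)}

lemma WordAmb.mul_mul_eq (h : WordAmb a b c d p q) : a * p * b = c * q * d := by
  cases h <;> simp_all [mul_assoc]

lemma WordAmb.swap : WordAmb a b c d p q → WordAmb c d a b q p
  | .overlap₁ a b p q h ha hb hla hlb => .overlap₂ b a q p h.symm hb ha hlb hla
  | .overlap₂ a b p q h ha hb hla hlb => .overlap₁ b a q p h.symm hb ha hlb hla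
  | .inclusion₁ a b p q h => .inclusion₂ a b q p h.symm
  | .inclusion₂ a b p q h => .inclusion₁ a b q p h.symm
  | .external₁ m p q => .external₂ m q p
  | .external₂ m p q => .external₁ m q p

lemma exists_wordAmb_of_mul_eq_mul_mul {B₁ B₂ u : FreeMonoid (Fin n)}
    (h : p * B₁ = u * (q * B₂)) : ∃ b d R, WordAmb 1 b u d p q ∧ B₁ = b * R ∧ B₂ = d * R := by
  rcases FreeMonoid.mul_eq_mul_iff.1 h with ⟨v, rfl, rfl⟩ | ⟨v, rfl, hv⟩
  · exact ⟨v * q, 1, B₂, .external₁ v p q, (mul_assoc ..).symm, by simp⟩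
  rcases FreeMonoid.mul_eq_mul_iff.1 hv with ⟨w, rfl, rfl⟩ | ⟨s, rfl, rfl⟩
  · exact ⟨1, w, B₁, .inclusion₁ u w _ q (mul_assoc ..).symm, by simp, rfl⟩
  by_cases hu : u = 1
  · subst hu
    exact ⟨s, 1, B₂, .inclusion₂ 1 s _ _ (by simp), rfl, by simp⟩
  by_cases hs : s = 1
  · subst hs
    exact ⟨1, 1, B₂, .inclusion₁ u 1 _ _ (by simp), by simp, by simp⟩
  by_cases hv : v = 1
  · subst hv
    exact ⟨s, 1, B₂, by simpa using WordAmb.external₁ 1 u s, rfl, by simp⟩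
  exact ⟨s, 1, B₂, .overlap₂ s u _ _ (mul_assoc ..) hs hu
    (FreeMonoid.length_lt_length_mul_left hv s) (FreeMonoid.length_lt_length_mul_right hv u),
    rfl, by simp⟩

lemma exists_wordAmb_of_mul_mul_eq {A₁ B₁ A₂ B₂ : FreeMonoid (Fin n)}
    (h : A₁ * p * B₁ = A₂ * q * B₂) :
    ∃ a b c d L R, WordAmb a b c d p q ∧
      A₁ = L * a ∧ B₁ = b * R ∧ A₂ = L * c ∧ B₂ = d * R := by
  rw [mul_assoc, mul_assoc] at h
  rcases FreeMonoid.mul_eq_mul_iff.1 h with ⟨u, rfl, hu⟩ | ⟨u, rfl, hu⟩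
  · obtain ⟨b, d, R, hW, rfl, rfl⟩ := exists_wordAmb_of_mul_eq_mul_mul hu
    exact ⟨1, b, u, d, A₁, R, hW, (mul_one _).symm, rfl, rfl, rfl⟩
  · obtain ⟨d, b, R, hW, rfl, rfl⟩ := exists_wordAmb_of_mul_eq_mul_mul hu
    exact ⟨u, b, 1, d, A₂, R, hW.swap, rfl, rfl, (mul_one _).symm, rfl⟩

end Words

lemma Finset.max_image_of_monotone {α β : Type*} [LinearOrder α] [LinearOrder β] {f : α → β}
    (hf : Monotone f) (s : Finset α) : (s.image f).max = s.max.map f := by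
  rw [Finset.max, Finset.max, Finset.sup_image,
    Finset.apply_sup_eq_sup_comp (WithBot.map f) (fun _ _ => hf.withBot_map.map_max) rfl]
  rfl

namespace Finsupp

variable {A B M : Type*} [LinearOrder A] [LinearOrder B] [AddCommGroup M] {X Y : A →₀ M} {a : A}

lemma max_support_mapDomain {f : A → B} (hf : StrictMono f) (X : A →₀ M) :
    (mapDomain f X).support.max = X.support.max.map f := by
  classical
  rw [mapDomain_support_of_injective hf.injective, Finset.max_image_of_monotone hf.monotone]

lemma max_support_add_le : (X + Y).support.max ≤ X.support.max ⊔ Y.support.max := by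
  classical
  exact (Finset.max_mono support_add).trans_eq Finset.max_union

lemma max_support_sub_le : (X - Y).support.max ≤ X.support.max ⊔ Y.support.max := by
  classical
  exact (Finset.max_mono support_sub).trans_eq Finset.max_union

lemma apply_eq_zero_of_max_support_lt (h : X.support.max < a) : X a = 0 :=
  notMem_support_iff.1 (Finset.notMem_of_max_lt_coe h)

lemma max_support_eq_of_le (h : X.support.max ≤ a) (ha : X a ≠ 0) : X.support.max = a :=
  h.antisymm (Finset.le_max (mem_support_iff.2 ha))

lemma max_support_sub_lt (hX : X.support.max ≤ a) (hY : Y.support.max ≤ a) (h : X a = Y a) :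
    (X - Y).support.max < a := by
  refine (max_support_sub_le.trans (sup_le hX hY)).lt_of_ne fun ha => ?_
  exact mem_support_iff.1 (Finset.mem_of_max ha) (by rw [sub_apply, h, sub_self])

lemma max_support_add_of_lt (h : Y.support.max < X.support.max) :
    (X + Y).support.max = X.support.max := by
  obtain ⟨a, ha⟩ := WithBot.ne_bot_iff_exists.1 (ne_bot_of_gt h)
  rw [← ha] at h ⊢
  refine max_support_eq_of_le (max_support_add_le.trans (sup_le ha.ge h.le)) ?_
  rw [add_apply, apply_eq_zero_of_max_support_lt h, add_zero]
  exact mem_support_iff.1 (Finset.mem_of_max ha.symm)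

end Finsupp

section Monomials

variable {k n r : ℕ}

noncomputable def monLR (m σ : MMon k n) (b : FreeMonoid (Fin n)) : MMon k n := m * σ * ⟨0, b⟩

lemma monLR_injective (m : MMon k n) (b : FreeMonoid (Fin n)) :
    Function.Injective (monLR m · b) := by
  intro σ τ h
  obtain ⟨hc, hw⟩ := MMon.ext_iff.1 h
  simp only [monLR, MMon.mul_c, MMon.mul_w, add_zero, add_right_inj] at hc hw
  exact MMon.ext hc (mul_left_cancel (mul_right_cancel hw))

lemma mulLR_injective (m : MMon k n) (b : FreeMonoid (Fin n)) :
    Function.Injective (mulLR m · b : ModMon k n r → ModMon k n r) := by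
  intro σ τ h
  obtain ⟨hu, ha, hi, hb⟩ := ModMon.ext_iff.1 h
  exact ModMon.ext (add_left_cancel hu) (mul_left_cancel ha) hi (mul_right_cancel hb)

lemma monLR_monLR (l m σ : MMon k n) (b w : FreeMonoid (Fin n)) :
    monLR l (monLR m σ b) w = monLR (l * m) σ (b * w) := by
  ext : 1 <;> simp [monLR, mul_assoc]

lemma mulLR_mulLR (l m : MMon k n) (σ : ModMon k n r) (b w : FreeMonoid (Fin n)) :
    mulLR l (mulLR m σ b) w = mulLR (l * m) σ (b * w) := by
  simp [mulLR, add_assoc, mul_assoc]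

lemma map_mulLR_mul_mul (l m : MMon k n) (b w : FreeMonoid (Fin n))
    (o : WithBot (ModMon k n r)) :
    o.map (mulLR (l * m) · (b * w)) = (o.map (mulLR m · b)).map (mulLR l · w) := by
  rw [WithBot.map_map]
  congr 1
  funext σ
  exact (mulLR_mulLR l m σ b w).symm

lemma monLR_eq_of_wordAmb {σ τ : MMon k n} {a₁ n₁ a₂ n₂ : FreeMonoid (Fin n)}
    (hW : WordAmb a₁ n₁ a₂ n₂ σ.w τ.w) :
    monLR ⟨(σ.c ⊔ τ.c) - σ.c, a₁⟩ σ n₁ = monLR ⟨(σ.c ⊔ τ.c) - τ.c, a₂⟩ τ n₂ := by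
  ext : 1
  · simp [monLR, tsub_add_cancel_of_le le_sup_left, tsub_add_cancel_of_le le_sup_right]
  · exact hW.mul_mul_eq

lemma exists_wordAmb_of_monLR_eq {m σ m' τ : MMon k n} {b b' : FreeMonoid (Fin n)}
    (h : monLR m σ b = monLR m' τ b') :
    ∃ (a₁ n₁ a₂ n₂ : FreeMonoid (Fin n)) (l : MMon k n) (w : FreeMonoid (Fin n)),
      WordAmb a₁ n₁ a₂ n₂ σ.w τ.w ∧
      m = l * ⟨(σ.c ⊔ τ.c) - σ.c, a₁⟩ ∧ b = n₁ * w ∧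
      m' = l * ⟨(σ.c ⊔ τ.c) - τ.c, a₂⟩ ∧ b' = n₂ * w := by
  obtain ⟨hc, hw⟩ := MMon.ext_iff.1 h
  simp only [monLR, MMon.mul_c, MMon.mul_w, add_zero] at hc hw
  obtain ⟨a₁, n₁, a₂, n₂, L, w, hW, hm, rfl, hm', rfl⟩ := exists_wordAmb_of_mul_mul_eq hw
  have hle : σ.c ⊔ τ.c ≤ m.c + σ.c := sup_le le_add_self (hc ▸ le_add_self)
  refine ⟨a₁, n₁, a₂, n₂, ⟨m.c + σ.c - (σ.c ⊔ τ.c), L⟩, w, hW, ?_, rfl, ?_, rfl⟩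
  · ext : 1
    · simp [tsub_add_tsub_cancel hle le_sup_left]
    · exact hm
  · ext : 1
    · rw [MMon.mul_c, tsub_add_tsub_cancel hle le_sup_right, hc, add_tsub_cancel_right]
    · exact hm'

end Monomials

section Algebra

variable {R : Type} [CommRing R] {k n r : ℕ}

lemma coeff_trm_mul_mul_wrd (m : MMon k n) (c : R) (g : MixedAlg R k n)
    (b : FreeMonoid (Fin n)) :
    (trm m c * g * wrd b).coeff = mapDomain (monLR m · b) (c • g.coeff) := by
  induction g using MonoidAlgebra.induction with
  | zero => simp [trm, wrd]
  | single_add σ e g _ _ ih =>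
    rw [mul_add, add_mul, MonoidAlgebra.coeff_add, MonoidAlgebra.coeff_add, smul_add,
      mapDomain_add, ← ih, trm, wrd, MonoidAlgebra.single_mul_single,
      MonoidAlgebra.single_mul_single, mul_one, MonoidAlgebra.coeff_single,
      MonoidAlgebra.coeff_single, smul_single, mapDomain_single, smul_eq_mul, monLR]

lemma coeff_trm_mul_mul_wrd_monLR (m : MMon k n) (c : R) (g : MixedAlg R k n)
    (σ : MMon k n) (b : FreeMonoid (Fin n)) :
    (trm m c * g * wrd b).coeff (monLR m σ b) = c * g.coeff σ := by
  rw [coeff_trm_mul_mul_wrd, mapDomain_apply (monLR_injective m b), Finsupp.smul_apply, smul_eq_mul]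

lemma scaleLR_eq_mapDomain (m : MMon k n) (c : R) (β : SigModule R k n r)
    (b : FreeMonoid (Fin n)) : scaleLR m c β b = mapDomain (mulLR m · b) (c • β) := by
  induction β using Finsupp.induction with
  | zero => simp [scaleLR]
  | single_add σ e β _ _ ih =>
    rw [smul_add, mapDomain_add, ← ih, smul_single, mapDomain_single, scaleLR,
      sum_add_index' (by simp) (fun _ _ _ => by rw [mul_add, single_add]), scaleLR,
      sum_single_index (by simp), smul_eq_mul]

lemma barMap_single (F : Fin r → MixedAlg R k n) (σ : ModMon k n r) (e : R) :
    barMap F (single σ e) = trm ⟨σ.u, σ.a⟩ e * F σ.i * wrd σ.b :=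
  sum_single_index (by simp [trm])

lemma barMap_add (F : Fin r → MixedAlg R k n) (X Y : SigModule R k n r) :
    barMap F (X + Y) = barMap F X + barMap F Y :=
  sum_add_index' (by simp [trm]) fun _ _ _ => by simp [trm, MonoidAlgebra.single_add, add_mul]

lemma barMap_sub (F : Fin r → MixedAlg R k n) (X Y : SigModule R k n r) :
    barMap F (X - Y) = barMap F X - barMap F Y :=
  map_sub (AddMonoidHom.mk' (barMap F) (barMap_add F)) X Y

lemma barMap_scaleLR (F : Fin r → MixedAlg R k n) (m : MMon k n) (c : R)
    (β : SigModule R k n r) (b : FreeMonoid (Fin n)) :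
    barMap F (scaleLR m c β b) = trm m c * barMap F β * wrd b := by
  induction β using Finsupp.induction_linear with
  | zero => simp [scaleLR, barMap]
  | add X Y hX hY =>
    rw [scaleLR_eq_mapDomain, smul_add, mapDomain_add, ← scaleLR_eq_mapDomain,
      ← scaleLR_eq_mapDomain, barMap_add, barMap_add, hX, hY, mul_add, add_mul]
  | single σ e =>
    rw [scaleLR_eq_mapDomain, smul_single, mapDomain_single, barMap_single, barMap_single]
    simp only [trm, wrd, mulLR, mul_assoc, MonoidAlgebra.single_mul_single]
    rw [← mul_assoc (MonoidAlgebra.single m c), MonoidAlgebra.single_mul_single, smul_eq_mul,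
      one_mul]
    congr 3

end Algebra

section Leading

variable {R : Type} [CommRing R] {k n r : ℕ}
variable [LinearOrder (MMon k n)] [LinearOrder (ModMon k n r)]

lemma IsOrderSetting.monLR_strictMono (hord : IsOrderSetting k n r) (m : MMon k n)
    (b : FreeMonoid (Fin n)) : StrictMono (monLR m · b) :=
  Monotone.strictMono_of_injective (fun _ _ h => hord.mon_mul _ _ _ _ h) (monLR_injective m b)

lemma IsOrderSetting.mulLR_strictMono (hord : IsOrderSetting k n r) (m : MMon k n)
    (b : FreeMonoid (Fin n)) : StrictMono (mulLR m · b : ModMon k n r → ModMon k n r) :=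
  Monotone.strictMono_of_injective (fun _ _ h => hord.mod_mul m b _ _ h) (mulLR_injective m b)

lemma LMb_eq_bot_iff {f : MixedAlg R k n} : LMb f = ⊥ ↔ f = 0 := by
  rw [LMb, Finset.max_eq_bot, support_eq_empty, MonoidAlgebra.coeff_eq_zero]

lemma LMd_eq_of_LMb_eq {f : MixedAlg R k n} {T : MMon k n} (h : LMb f = T) : LMd f = T := by
  change WithBot.unbotD 1 (LMb f) = T
  rw [h, WithBot.unbotD_coe]

lemma LMb_eq_coe_LMd {f : MixedAlg R k n} (hf : f ≠ 0) : LMb f = LMd f := by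
  obtain ⟨T, hT⟩ := WithBot.ne_bot_iff_exists.1 (LMb_eq_bot_iff.not.2 hf)
  rw [← hT, LMd_eq_of_LMb_eq hT.symm]

lemma LMb_le_coe_LMd (f : MixedAlg R k n) : LMb f ≤ LMd f := by
  rcases eq_or_ne f 0 with rfl | hf
  · rw [LMb_eq_bot_iff.2 rfl]
    exact bot_le
  · exact (LMb_eq_coe_LMd hf).le

lemma LC_ne_zero {f : MixedAlg R k n} (hf : f ≠ 0) : LC f ≠ 0 :=
  mem_support_iff.1 (Finset.mem_of_max (LMb_eq_coe_LMd hf))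

lemma LMd_eq_of_LMb_le {f : MixedAlg R k n} {T : MMon k n} (h : LMb f ≤ T)
    (hT : f.coeff T ≠ 0) : LMd f = T :=
  LMd_eq_of_LMb_eq (max_support_eq_of_le h hT)

variable [IsDomain R]

lemma LMb_trm_mul_mul_wrd (hord : IsOrderSetting k n r) (m : MMon k n) {c : R} (hc : c ≠ 0)
    (g : MixedAlg R k n) (b : FreeMonoid (Fin n)) :
    LMb (trm m c * g * wrd b) = (LMb g).map (monLR m · b) := by
  rw [LMb, LMb, coeff_trm_mul_mul_wrd, max_support_mapDomain (hord.monLR_strictMono m b),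
    support_smul_eq hc]

lemma LMb_trm_mul_mul_wrd_le (hord : IsOrderSetting k n r) (m : MMon k n) (c : R)
    (g : MixedAlg R k n) (b : FreeMonoid (Fin n)) :
    LMb (trm m c * g * wrd b) ≤ monLR m (LMd g) b := by
  rcases eq_or_ne c 0 with rfl | hc
  · simp [trm, LMb_eq_bot_iff.2]
  · rw [LMb_trm_mul_mul_wrd hord m hc]
    exact (hord.monLR_strictMono m b).monotone.withBot_map (LMb_le_coe_LMd g)

lemma LMd_trm_mul_mul_wrd (hord : IsOrderSetting k n r) (m : MMon k n) {c : R} (hc : c ≠ 0)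
    {g : MixedAlg R k n} (hg : g ≠ 0) (b : FreeMonoid (Fin n)) :
    LMd (trm m c * g * wrd b) = monLR m (LMd g) b :=
  LMd_eq_of_LMb_le (LMb_trm_mul_mul_wrd_le hord m c g b)
    (by rw [coeff_trm_mul_mul_wrd_monLR]; exact mul_ne_zero hc (LC_ne_zero hg))

lemma LC_trm_mul_mul_wrd (hord : IsOrderSetting k n r) (m : MMon k n) {c : R} (hc : c ≠ 0)
    {g : MixedAlg R k n} (hg : g ≠ 0) (b : FreeMonoid (Fin n)) :
    LC (trm m c * g * wrd b) = c * LC g := by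
  rw [LC, LMd_trm_mul_mul_wrd hord m hc hg b, coeff_trm_mul_mul_wrd_monLR, LC]

end Leading

section Signatures

variable {R : Type} [CommRing R] {k n r : ℕ} [LinearOrder (ModMon k n r)]

lemma sigb_neg (α : SigModule R k n r) : sigb (-α) = sigb α := by
  rw [sigb, sigb, support_neg]

lemma exists_sigb_eq_coe {α : SigModule R k n r} (hα : α ≠ 0) :
    ∃ σ : ModMon k n r, sigb α = σ :=
  (WithBot.ne_bot_iff_exists.1 (Finset.max_eq_bot.not.2 (support_eq_empty.not.2 hα))).imp
    fun _ => Eq.symm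

lemma sigb_scaleLR [LinearOrder (MMon k n)] [IsDomain R] (hord : IsOrderSetting k n r)
    (m : MMon k n) {c : R} (hc : c ≠ 0) (β : SigModule R k n r) (b : FreeMonoid (Fin n)) :
    sigb (scaleLR m c β b) = (sigb β).map (mulLR m · b) := by
  rw [sigb, sigb, scaleLR_eq_mapDomain, max_support_mapDomain (hord.mulLR_strictMono m b),
    support_smul_eq hc]

lemma sigb_scaleLR_le [LinearOrder (MMon k n)] [IsDomain R] (hord : IsOrderSetting k n r)
    (m : MMon k n) (c : R) (β : SigModule R k n r) (b : FreeMonoid (Fin n)) :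
    sigb (scaleLR m c β b) ≤ (sigb β).map (mulLR m · b) := by
  rcases eq_or_ne c 0 with rfl | hc
  · simp [scaleLR_eq_mapDomain, sigb]
  · exact (sigb_scaleLR hord m hc β b).le

variable [NeZero r]

lemma sigMd_eq_of_sigb_eq {α : SigModule R k n r} {σ : ModMon k n r} (h : sigb α = σ) :
    sigMd α = σ := by
  change WithBot.unbotD default (sigb α) = σ
  rw [h, WithBot.unbotD_coe]

lemma sigb_sigT (α : SigModule R k n r) : sigb (sigT α) = sigb α := by
  rcases eq_or_ne α 0 with rfl | hα
  · simp [sigT, sigC]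
  obtain ⟨σ, hσ⟩ := exists_sigb_eq_coe hα
  have hC : sigC α ≠ 0 := by
    rw [sigC, sigMd_eq_of_sigb_eq hσ]
    exact mem_support_iff.1 (Finset.mem_of_max hσ)
  rw [sigb, sigT, support_single _ hC, Finset.max_singleton, sigMd_eq_of_sigb_eq hσ, hσ]

lemma sigb_sub_lt_of_sigT_eq {α γ : SigModule R k n r} (h : sigT α = sigT γ) (hα : α ≠ 0) :
    sigb (α - γ) < sigb α := by
  obtain ⟨σ, hσ⟩ := exists_sigb_eq_coe hα
  have hγ : sigb γ = σ := by rw [← sigb_sigT, ← h, sigb_sigT, hσ]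
  rw [hσ]
  refine max_support_sub_lt (X := α) (Y := γ) hσ.le hγ.le ?_
  simpa [sigT, sigC, sigMd_eq_of_sigb_eq hσ, sigMd_eq_of_sigb_eq hγ] using congrArg (· σ) h

end Signatures

section Complete

variable {R : Type} [CommRing R] {k n r : ℕ} [LinearOrder (MMon k n)] [LinearOrder (ModMon k n r)]

lemma not_sigReducible_zero (G : Set (MixedAlg R k n × SigModule R k n r))
    (α : SigModule R k n r) : ¬SigReducible G 0 α := by
  rintro ⟨_, _, _, _, _, _, _, _, hlt, _⟩
  rw [LMb_eq_bot_iff.2 rfl] at hlt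
  exact not_lt_bot hlt

variable [GCDMonoid R] [NeZero r]

lemma sigb_ambSIG (f g : MixedAlg R k n) (α β : SigModule R k n r) (m₁ : MMon k n)
    (n₁ : FreeMonoid (Fin n)) (m₂ : MMon k n) (n₂ : FreeMonoid (Fin n)) :
    sigb (ambSIG f g α β m₁ n₁ m₂ n₂) =
      sigb (scaleLR m₁ (cofL f g) α n₁) ⊔ sigb (scaleLR m₂ (cofR f g) β n₂) := by
  unfold ambSIG
  split_ifs with h
  · rw [sigb_sigT, sup_eq_left.2 h]
  · rw [sigb_neg, sigb_sigT, sup_eq_right.2 (not_le.1 h).le]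

-- The self-ambiguity `(1 ⊗ 1, 1 ⊗ 1)` of `0` has G-polynomial `0`, which is never sig-reducible.
lemma CompleteSet.ne_zero {G : Set (MixedAlg R k n × SigModule R k n r)} (hcomp : CompleteSet G)
    {g : MixedAlg R k n} {β : SigModule R k n r} (h : (g, β) ∈ G) : g ≠ 0 := by
  rintro rfl
  have hLMd : LMd (0 : MixedAlg R k n) = 1 := rfl
  have hamb : IsAmb (0 : MixedAlg R k n) 0 1 1 1 1 :=
    ⟨1, 1, 1, 1, by simpa [hLMd] using WordAmb.inclusion₁ 1 1 1 1 (by simp),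
      by ext : 1 <;> simp [hLMd], rfl, by ext : 1 <;> simp [hLMd], rfl⟩
  have hbez (c d : R) : BezoutFor c d (0 : MixedAlg R k n) 0 := by
    simpa [BezoutFor, LC] using ((gcd_eq_zero_iff (0 : R) 0).2 ⟨rfl, rfl⟩).symm
  have hGPolP (c d : R) : GPolP c d (0 : MixedAlg R k n) 0 1 1 1 1 = 0 := by simp [GPolP]
  have hscale (m : MMon k n) (b : FreeMonoid (Fin n)) : scaleLR m 0 β b = 0 := by
    simp [scaleLR]
  set c₁ := cofL (0 : MixedAlg R k n) 0
  set c₂ := cofR (0 : MixedAlg R k n) 0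
  rcases le_total (sigb (scaleLR 1 c₂ β 1)) (sigb (scaleLR 1 c₁ β 1)) with hle | hle
  · refine not_sigReducible_zero G _
      (hGPolP c₁ 0 ▸ hcomp 0 β 0 β h h 1 1 1 1 hamb c₁ 0 (hbez _ _) ?_)
    rw [sigb_ambSIG, sup_eq_left.2 hle, GPolM, hscale, add_zero]
  · refine not_sigReducible_zero G _
      (hGPolP 0 c₂ ▸ hcomp 0 β 0 β h h 1 1 1 1 hamb 0 c₂ (hbez _ _) ?_)
    rw [sigb_ambSIG, sup_eq_right.2 hle, GPolM, hscale, zero_add]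

end Complete

section TopDivisible

variable {R : Type} [CommRing R] {k n r : ℕ}
variable [LinearOrder (MMon k n)] [LinearOrder (ModMon k n r)]

/-- Sig-reducibility of a polynomial with leading term `e·T` below signature `s`, stripped of
the polynomial. -/
def TopDivisible (G : Set (MixedAlg R k n × SigModule R k n r)) (s : WithBot (ModMon k n r))
    (T : MMon k n) (e : R) : Prop :=
  ∃ g β, (g, β) ∈ G ∧ g ≠ 0 ∧ ∃ m b, monLR m (LMd g) b = T ∧
    (sigb β).map (mulLR m · b) ≤ s ∧ LC g ∣ e

variable {G : Set (MixedAlg R k n × SigModule R k n r)} {s : WithBot (ModMon k n r)}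
  {T : MMon k n} {e : R}

lemma TopDivisible.of_dvd (h : TopDivisible G s T e) {e' : R} (he : e ∣ e') :
    TopDivisible G s T e' := by
  obtain ⟨g, β, hG, hg, m, b, hT, hs, hd⟩ := h
  exact ⟨g, β, hG, hg, m, b, hT, hs, hd.trans he⟩

lemma TopDivisible.lift (hord : IsOrderSetting k n r) (h : TopDivisible G s T e) (l : MMon k n)
    (w : FreeMonoid (Fin n)) : TopDivisible G (s.map (mulLR l · w)) (monLR l T w) e := by
  obtain ⟨g, β, hG, hg, m, b, rfl, hs, hd⟩ := h
  refine ⟨g, β, hG, hg, l * m, b * w, (monLR_monLR ..).symm, ?_, hd⟩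
  rw [map_mulLR_mul_mul]
  exact (hord.mulLR_strictMono l w).monotone.withBot_map hs

variable [IsDomain R]

lemma SigReducible.topDivisible (hord : IsOrderSetting k n r) {p : MixedAlg R k n}
    {γ : SigModule R k n r} (h : SigReducible G p γ) (hp : p ≠ 0) :
    TopDivisible G (sigb γ) (LMd p) (LC p) := by
  obtain ⟨g, β, hG, m, c, b, hc, hLT, -, hsig⟩ := h
  have hg : g ≠ 0 := by
    rintro rfl
    refine (MonoidAlgebra.single_ne_zero (m := LMd p)).2 (LC_ne_zero hp) ?_
    simpa [LTerm, LC, trm] using hLT.symm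
  rw [LTerm, LTerm, LMd_trm_mul_mul_wrd hord m hc hg b, LC_trm_mul_mul_wrd hord m hc hg b, trm, trm,
    MonoidAlgebra.single_inj] at hLT
  obtain ⟨hT, hC⟩ := hLT.resolve_right fun h => LC_ne_zero hp h.2
  exact ⟨g, β, hG, hg, m, b, hT, sigb_scaleLR hord m hc β b ▸ hsig, c, by rw [← hC, mul_comm]⟩

lemma TopDivisible.sigReducible (hord : IsOrderSetting k n r) {f : MixedAlg R k n}
    {α : SigModule R k n r} (h : TopDivisible G (sigb α) (LMd f) (LC f)) (hf : f ≠ 0) :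
    SigReducible G f α := by
  obtain ⟨g, β, hG, hg, m, b, hT, hs, e, he⟩ := h
  have he0 : e ≠ 0 := by
    rintro rfl
    exact LC_ne_zero hf (by rw [he, mul_zero])
  have hLC : e * LC g = LC f := (mul_comm _ _).trans he.symm
  refine ⟨g, β, hG, m, e, b, he0, ?_, ?_, sigb_scaleLR hord m he0 β b ▸ hs⟩
  · rw [LTerm, LTerm, LMd_trm_mul_mul_wrd hord m he0 hg b, LC_trm_mul_mul_wrd hord m he0 hg b,
      hT, hLC]
  · rw [LMb_eq_coe_LMd hf, LMb, MonoidAlgebra.coeff_sub]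
    refine max_support_sub_lt (LMb_eq_coe_LMd hf).le (hT ▸ LMb_trm_mul_mul_wrd_le hord m e g b) ?_
    rw [← hT, coeff_trm_mul_mul_wrd_monLR, hT]
    exact hLC.symm

end TopDivisible

section GPolynomial

variable {R : Type} [CommRing R] {k n r : ℕ} [LinearOrder (MMon k n)] [LinearOrder (ModMon k n r)]
variable {G : Set (MixedAlg R k n × SigModule R k n r)} {g g₂ : MixedAlg R k n}
  {β β₂ : SigModule R k n r}

lemma IsAmb.monLR_eq {m₁ m₂ : MMon k n} {n₁ n₂ : FreeMonoid (Fin n)}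
    (h : IsAmb g g₂ m₁ n₁ m₂ n₂) : monLR m₁ (LMd g) n₁ = monLR m₂ (LMd g₂) n₂ := by
  obtain ⟨a, b, c, d, hW, rfl, rfl, rfl, rfl⟩ := h
  exact monLR_eq_of_wordAmb hW

lemma exists_isAmb_of_monLR_eq {m m' : MMon k n} {b b' : FreeMonoid (Fin n)}
    (h : monLR m (LMd g) b = monLR m' (LMd g₂) b') :
    ∃ (m₁ : MMon k n) (n₁ : FreeMonoid (Fin n)) (m₂ : MMon k n) (n₂ : FreeMonoid (Fin n))
      (l : MMon k n) (w : FreeMonoid (Fin n)),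
      IsAmb g g₂ m₁ n₁ m₂ n₂ ∧ m = l * m₁ ∧ b = n₁ * w ∧ m' = l * m₂ ∧ b' = n₂ * w := by
  obtain ⟨a₁, n₁, a₂, n₂, l, w, hW, rfl, rfl, rfl, rfl⟩ := exists_wordAmb_of_monLR_eq h
  exact ⟨_, n₁, _, n₂, l, w, ⟨a₁, n₁, a₂, n₂, hW, rfl, rfl, rfl, rfl⟩, rfl, rfl, rfl, rfl⟩

variable [GCDMonoid R]

lemma cofL_ne_zero (hg : g ≠ 0) (hg₂ : g₂ ≠ 0) : cofL g g₂ ≠ 0 := by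
  intro h
  have hlcm := Classical.choose_spec (dvd_lcm_left (LC g) (LC g₂))
  rw [← cofL, h, mul_zero, lcm_eq_zero_iff] at hlcm
  exact hlcm.elim (LC_ne_zero hg) (LC_ne_zero hg₂)

variable [IsDomain R] [NeZero r]

lemma topDivisible_of_isAmb (hord : IsOrderSetting k n r) (hcomp : CompleteSet G)
    (hgG : (g, β) ∈ G) (hg₂G : (g₂, β₂) ∈ G) (hg : g ≠ 0) (hg₂ : g₂ ≠ 0)
    {m₁ m₂ : MMon k n} {n₁ n₂ : FreeMonoid (Fin n)} (hamb : IsAmb g g₂ m₁ n₁ m₂ n₂)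
    (hsig : (sigb β₂).map (mulLR m₂ · n₂) < (sigb β).map (mulLR m₁ · n₁))
    {x y : R} (hxy : BezoutFor x y g g₂) (hx : x ≠ 0) :
    TopDivisible G ((sigb β).map (mulLR m₁ · n₁)) (monLR m₁ (LMd g) n₁)
      (gcd (LC g) (LC g₂)) := by
  have hsig₁ {c : R} (hc : c ≠ 0) : sigb (scaleLR m₁ c β n₁) = (sigb β).map (mulLR m₁ · n₁) :=
    sigb_scaleLR hord m₁ hc β n₁
  have hsig₂ (c : R) : sigb (scaleLR m₂ c β₂ n₂) < (sigb β).map (mulLR m₁ · n₁) :=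
    (sigb_scaleLR_le hord m₂ c β₂ n₂).trans_lt hsig
  have hGPolM : sigb (GPolM x y β β₂ m₁ n₁ m₂ n₂) = (sigb β).map (mulLR m₁ · n₁) :=
    (max_support_add_of_lt ((hsig₂ y).trans_eq (hsig₁ hx).symm)).trans (hsig₁ hx)
  have hSIG : sigb (ambSIG g g₂ β β₂ m₁ n₁ m₂ n₂) = (sigb β).map (mulLR m₁ · n₁) := by
    rw [sigb_ambSIG, hsig₁ (cofL_ne_zero hg hg₂), sup_eq_left.2 (hsig₂ _).le]
  have hcoeff : (GPolP x y g g₂ m₁ n₁ m₂ n₂).coeff (monLR m₁ (LMd g) n₁) = gcd (LC g) (LC g₂) := by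
    rw [GPolP, MonoidAlgebra.coeff_add, Finsupp.add_apply, coeff_trm_mul_mul_wrd_monLR,
      hamb.monLR_eq, coeff_trm_mul_mul_wrd_monLR]
    exact hxy
  have hgcd : gcd (LC g) (LC g₂) ≠ 0 := fun h => LC_ne_zero hg ((gcd_eq_zero_iff _ _).1 h).1
  have hLMd : LMd (GPolP x y g g₂ m₁ n₁ m₂ n₂) = monLR m₁ (LMd g) n₁ := by
    refine LMd_eq_of_LMb_le (max_support_add_le.trans (sup_le ?_ ?_)) (hcoeff ▸ hgcd)
    · exact LMb_trm_mul_mul_wrd_le hord m₁ x g n₁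
    · exact hamb.monLR_eq ▸ LMb_trm_mul_mul_wrd_le hord m₂ y g₂ n₂
  have hP : GPolP x y g g₂ m₁ n₁ m₂ n₂ ≠ 0 := by
    intro h
    exact hgcd (by rw [← hcoeff, h]; rfl)
  have h := (hcomp g β g₂ β₂ hgG hg₂G m₁ n₁ m₂ n₂ hamb x y hxy
    (hGPolM.trans hSIG.symm)).topDivisible hord hP
  rwa [hGPolM, LC, hLMd, hcoeff] at h

lemma topDivisible_gcd [IsPrincipalIdealRing R] (hord : IsOrderSetting k n r)
    (hcomp : CompleteSet G) (hgG : (g, β) ∈ G) (hg₂G : (g₂, β₂) ∈ G) (hg : g ≠ 0) (hg₂ : g₂ ≠ 0)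
    {m m₂ : MMon k n} {b b₂ : FreeMonoid (Fin n)}
    (hT : monLR m (LMd g) b = monLR m₂ (LMd g₂) b₂)
    (hsig : (sigb β₂).map (mulLR m₂ · b₂) < (sigb β).map (mulLR m · b)) :
    TopDivisible G ((sigb β).map (mulLR m · b)) (monLR m (LMd g) b) (gcd (LC g) (LC g₂)) := by
  by_cases hdvd : LC g₂ ∣ gcd (LC g) (LC g₂)
  · exact ⟨g₂, β₂, hg₂G, hg₂, m₂, b₂, hT.symm, hsig.le, hdvd⟩
  -- The Bézout coefficient of `LC g` is then nonzero, so the G-polynomial has the signature of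
  -- its `g`-side.
  obtain ⟨x, y, hxy⟩ := exists_gcd_eq_mul_add_mul (LC g) (LC g₂)
  have hx : x ≠ 0 := by
    rintro rfl
    exact hdvd ⟨y, by rw [hxy, mul_zero, zero_add]⟩
  obtain ⟨m₁, n₁, m₂, n₂, l, w, hamb, rfl, rfl, rfl, rfl⟩ := exists_isAmb_of_monLR_eq hT
  rw [map_mulLR_mul_mul, map_mulLR_mul_mul, (hord.mulLR_strictMono l w).withBot_map.lt_iff_lt]
    at hsig
  rw [map_mulLR_mul_mul, ← monLR_monLR]
  exact (topDivisible_of_isAmb hord hcomp hgG hg₂G hg hg₂ hamb hsig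
    (x := x) (y := y) (by rw [BezoutFor, hxy]; ring) hx).lift hord l w

end GPolynomial

lemma IsSigGBUpTo.topDivisible_sub {R : Type} [CommRing R] [IsDomain R] {k n r : ℕ}
    [LinearOrder (MMon k n)] [LinearOrder (ModMon k n r)] (hord : IsOrderSetting k n r)
    {F : Fin r → MixedAlg R k n} {G : Set (MixedAlg R k n × SigModule R k n r)}
    {f : MixedAlg R k n} {α : SigModule R k n r} (hGB : IsSigGBUpTo F G (sigb α))
    (hGI : ∀ p ∈ G, Labeled F p) (hlab : barMap F α = f) {g : MixedAlg R k n}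
    {β : SigModule R k n r} (hgG : (g, β) ∈ G) {m : MMon k n} {c : R}
    {b : FreeMonoid (Fin n)} (hT : monLR m (LMd g) b = LMd f)
    (hsig : sigb (α - scaleLR m c β b) < sigb α) (hne : LC f ≠ c * LC g) :
    TopDivisible G (sigb (α - scaleLR m c β b)) (LMd f) (LC f - c * LC g) := by
  set h := f - trm m c * g * wrd b
  have hcoeff : h.coeff (LMd f) = LC f - c * LC g := by
    rw [MonoidAlgebra.coeff_sub, Finsupp.sub_apply, ← hT, coeff_trm_mul_mul_wrd_monLR, hT, LC, LC]
  have hh : h.coeff (LMd f) ≠ 0 := hcoeff ▸ sub_ne_zero.2 hne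
  have hLMd : LMd h = LMd f := by
    refine LMd_eq_of_LMb_le ?_ hh
    rw [LMb, MonoidAlgebra.coeff_sub]
    exact max_support_sub_le.trans
      (sup_le (LMb_le_coe_LMd f) (hT ▸ LMb_trm_mul_mul_wrd_le hord m c g b))
  have hh0 : h ≠ 0 := by
    intro h0
    exact hh (by rw [h0]; rfl)
  have hlabh : barMap F (α - scaleLR m c β b) = h := by
    have hβ : barMap F β = g := hGI (g, β) hgG
    rw [barMap_sub, barMap_scaleLR, hlab, hβ]
  have hred := (hGB h _ hlabh hh0 hsig).topDivisible hord hh0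
  rwa [LC, hLMd, hcoeff] at hred

/-- Proposition 4.12.  If `G ⊆ I^{[Σ]}` is complete and a
signature Gröbner basis up to signature `sig(α)`, and `f^{[α]} ∈ I^{[Σ]}` is
super reducible by `G`, then `f^{[α]}` is sig-reducible by `G`. -/
theorem super_reducible_implies_sig_reducible
    {R : Type} [CommRing R] [IsDomain R] [IsPrincipalIdealRing R] [GCDMonoid R]
    {k n r : ℕ} [NeZero r]
    [LinearOrder (MMon k n)] [LinearOrder (ModMon k n r)]
    (hord : IsOrderSetting k n r)
    (F : Fin r → MixedAlg R k n)
    (G : Set (MixedAlg R k n × SigModule R k n r))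
    (hGI : ∀ p ∈ G, Labeled F p)
    (hcomp : CompleteSet G)
    (f : MixedAlg R k n) (α : SigModule R k n r)
    (hlab : barMap F α = f)
    (hGB : IsSigGBUpTo F G (sigb α))
    (hsup : SuperReducible G f α) :
    SigReducible G f α := by
  obtain ⟨g, β, hgG, m, c, b, hc, hsigT, hLMb⟩ := hsup
  have hg : g ≠ 0 := hcomp.ne_zero hgG
  have hLMb' : LMb f = monLR m (LMd g) b := by
    rw [hLMb, LMb_trm_mul_mul_wrd hord m hc, LMb_eq_coe_LMd hg, WithBot.map_coe]
  have hf : f ≠ 0 := fun h => WithBot.coe_ne_bot (hLMb'.symm.trans (LMb_eq_bot_iff.2 h))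
  have hT : monLR m (LMd g) b = LMd f := (LMd_eq_of_LMb_eq hLMb').symm
  have hα : α ≠ 0 := by
    rintro rfl
    exact hf (hlab ▸ sum_zero_index)
  have hsα : (sigb β).map (mulLR m · b) = sigb α := by
    rw [← sigb_sigT α, hsigT, sigb_sigT, sigb_scaleLR hord m hc]
  refine TopDivisible.sigReducible hord ?_ hf
  by_cases hdvd : LC g ∣ LC f
  · exact ⟨g, β, hgG, hg, m, b, hT, hsα.le, hdvd⟩
  have hsig := sigb_sub_lt_of_sigT_eq hsigT hα
  obtain ⟨g₂, β₂, hg₂G, hg₂, m₂, b₂, hT₂, hsig₂, hdvd₂⟩ :=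
    hGB.topDivisible_sub hord hGI hlab hgG hT hsig fun h => hdvd ⟨c, h.trans (mul_comm _ _)⟩
  have hgcd : gcd (LC g) (LC g₂) ∣ LC f := by
    rw [← add_sub_cancel (c * LC g) (LC f)]
    exact dvd_add (dvd_mul_of_dvd_right (gcd_dvd_left _ _) _) ((gcd_dvd_right _ _).trans hdvd₂)
  rw [← hT, ← hsα]
  exact (topDivisible_gcd hord hcomp hgG hg₂G hg hg₂ (hT.trans hT₂.symm)
    (hsig₂.trans_lt (hsig.trans_eq hsα.symm))).of_dvd hgcd
end

section
/- In Algorithm 1 (signature Gröbner basis computation), with the spooling mechanism that enumerates for each pair of basis elements all of their ambiguities via the functions firstamb and nextamb, and adds the corresponding S- and G-polynomials to the queue P in rounds, if insertion into and selection from P is done first in, first out, then the algorithm is fair: for every ambiguity of elements of G^{[Σ]}, the corresponding S- and G-polynomials are eventually processed in the main loop or discarded. -/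
/-! The `N`-th ambiguity in the enumeration of a pair enters the spool `N` rounds after the first
one does, and its pairs join the queue in the following iteration. In a FIFO queue an entry at
position `i` is at the front `i` iterations later. -/

theorem head?_add_eq_of_getElem?_eq {α : Type*} {Q : ℕ → List α}
    (hQ : ∀ t, ∃ new : List α, Q (t + 1) = (Q t).tail ++ new) :
    ∀ {i t : ℕ} {p : α}, (Q t)[i]? = some p → (Q (t + i)).head? = some p
  | 0, _, _, hp => by rwa [List.head?_eq_getElem?]
  | i + 1, t, p, hp => by
    obtain ⟨new, hnew⟩ := hQ t
    have hpt : (Q t).tail[i]? = some p := by rwa [List.getElem?_tail]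
    have hlt : i < (Q t).tail.length := (List.getElem?_eq_some_iff.1 hpt).1
    rw [← Nat.add_assoc, Nat.add_right_comm]
    refine head?_add_eq_of_getElem?_eq hQ ?_
    rwa [hnew, List.getElem?_append_left hlt]

theorem exists_head?_eq_of_mem {α : Type*} {Q : ℕ → List α}
    (hQ : ∀ t, ∃ new : List α, Q (t + 1) = (Q t).tail ++ new) {t : ℕ} {p : α} (hp : p ∈ Q t) :
    ∃ s, (Q s).head? = some p :=
  let ⟨_, hi⟩ := List.getElem?_of_mem hp
  ⟨_, head?_add_eq_of_getElem?_eq hQ hi⟩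

theorem iterate_of_step {α : Type*} {f : α → α} {P : ℕ → α → Prop}
    (hstep : ∀ t a, P t a → P (t + 1) (f a)) {t : ℕ} {a : α} (ha : P t a) :
    ∀ n, P (t + n) (f^[n] a)
  | 0 => ha
  | n + 1 => by
    rw [Function.iterate_succ_apply', ← Nat.add_assoc]
    exact hstep _ _ (iterate_of_step hstep ha n)

/-- Proposition: fairness of the spooled algorithm.  We model
the pair-handling machinery of Algorithm 1: a basis `G` of labeled polynomials
growing over time, a spool `spool` of ambiguities, and a queue `Q` of pairs
(S- and G-polynomials).  The functions `firstamb`/`nextamb` enumerate, for each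
pair of basis elements, all of their ambiguities.  Each round, for every
ambiguity currently in the spool, the corresponding S-polynomial (if the
ambiguity is regular; otherwise it is discarded) and G-polynomial are inserted
at the back of the queue, and the spool entry is replaced by the next
ambiguity; whenever two elements are in the basis, their first ambiguity is
put into the spool.  If insertion into and selection from the queue `Q` are
done first in, first out (each iteration the front element of `Q` is selected
and removed, and the new pairs are appended at the back), then the algorithm is
fair: for every ambiguity of elements of the basis, the corresponding S- and
G-polynomials are eventually processed in the main loop (i.e. eventually appear
at the front of the queue) or discarded (the S-polynomial of a non-regular
ambiguity). -/
theorem algorithm_is_fair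
    (Lab Amb Pair : Type)
    -- the set of ambiguities of two labeled polynomials
    (ambOf : Lab → Lab → Set Amb)
    -- enumeration of the ambiguities of a pair of labeled polynomials
    (firstamb : Lab → Lab → Amb) (nextamb : Amb → Amb)
    (henum : ∀ g h a, a ∈ ambOf g h → ∃ N : ℕ, nextamb^[N] (firstamb g h) = a)
    -- the S- and G-polynomial pairs of an ambiguity, and regularity
    (sPair gPair : Amb → Pair) (regular : Amb → Prop)
    -- the state of the algorithm at each iteration: basis, queue and spool
    (G : ℕ → Set Lab) (Q : ℕ → List Pair) (spool : ℕ → List Amb)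
    -- FIFO: each iteration the front element of the queue is selected and
    -- removed, and the newly produced pairs are appended at the back
    (hQ : ∀ t, ∃ new : List Pair, Q (t + 1) = (Q t).tail ++ new)
    -- each iteration, every ambiguity in the spool has its S-polynomial (if
    -- regular, otherwise it is discarded) and its G-polynomial inserted into
    -- the queue...
    (hins : ∀ t, ∀ a ∈ spool t, (regular a → sPair a ∈ Q (t + 1)) ∧ gPair a ∈ Q (t + 1))
    -- ...and is replaced by the next ambiguity in the enumeration
    (hnext : ∀ t, ∀ a ∈ spool t, nextamb a ∈ spool (t + 1))
    -- whenever two elements belong to the basis, their first ambiguity is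
    -- eventually put into the spool
    (hfirst : ∀ g h t, g ∈ G t → h ∈ G t → ∃ t', firstamb g h ∈ spool t') :
    ∀ g h t, g ∈ G t → h ∈ G t → ∀ a ∈ ambOf g h,
      ((∃ s, (Q s).head? = some (sPair a)) ∨ ¬ regular a) ∧
      (∃ s, (Q s).head? = some (gPair a)) := by
  intro g h t hg hh a ha
  obtain ⟨N, rfl⟩ := henum g h a ha
  obtain ⟨t', hfirst_mem⟩ := hfirst g h t hg hh
  have ha_spool : nextamb^[N] (firstamb g h) ∈ spool (t' + N) :=
    iterate_of_step (P := fun t a => a ∈ spool t) (fun t a => hnext t a) hfirst_mem N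
  obtain ⟨hsPair, hgPair⟩ := hins _ _ ha_spool
  exact ⟨(em (regular _)).imp (fun hr => exists_head?_eq_of_mem hQ (hsPair hr)) id,
    exists_head?_eq_of_mem hQ hgPair⟩
end
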